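/- Fix A ∈ ℝ and assume: (C1) g is C² on an open neighborhood of A; (C2) ∫_{(1,∞)} Π(du) · max_{A−u ≤ ζ ≤ A} |g(ζ) − g(A)| < ∞. Then there exists a finite constant C_A, independent of x, such that for every x > A: ∫_{(0,∞)} Π(du) ∫_0^{min(u, x−A)} W'(x−z−A) |g(z+A−u) − g(A)| dz ≤ e^{Φ(x−A)} C_A. -/

import Mathlib

open MeasureTheory Real Set

/-! Since `e^{-Φy} W(y) ≤ C` and its derivative is at most `L`, `W'(y) ≤ (L + ΦC) e^{Φy}`.
Writing `M(u)` (`leftOscillation g A u`) for the supremum of `|g - g(A)|` on `[A - u, A]`, the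
inner integral is then at most
`(L + ΦC)⁺ e^{Φ(x-A)} M(u) ∫_0^u e^{-Φz} dz ≤ (L + ΦC)⁺ e^{Φ(x-A)} M(u) min(u, 1/Φ)`,
so it suffices that `∫ M(u) min(u, 1/Φ) Π(du) < ∞`. On `(0,1]` the `C¹` regularity of `g` at `A`
gives `M(u) = O(u)`, so the integrand is `O(min(1, u²))`; on `(1,∞)` it is at most `M(u)/Φ`, which
is integrable by (C2). -/

noncomputable def leftOscillation (g : ℝ → ℝ) (A u : ℝ) : ℝ :=
  sSup ((fun ζ => |g ζ - g A|) '' Icc (A - u) A)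

section leftOscillation

variable {g : ℝ → ℝ} {A u : ℝ}

lemma bddAbove_abs_sub_image_Icc (hg : ∀ K : Set ℝ, IsCompact K → ∃ M : ℝ, ∀ y ∈ K, |g y| ≤ M)
    (A u : ℝ) : BddAbove ((fun ζ => |g ζ - g A|) '' Icc (A - u) A) := by
  obtain ⟨M, hM⟩ := hg (Icc (A - u) A) isCompact_Icc
  refine ⟨M + |g A|, forall_mem_image.2 fun ζ hζ => ?_⟩
  exact (abs_sub _ _).trans (by linarith [hM ζ hζ])

lemma abs_sub_le_leftOscillation (hb : BddAbove ((fun ζ => |g ζ - g A|) '' Icc (A - u) A))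
    {ζ : ℝ} (hζ : ζ ∈ Icc (A - u) A) : |g ζ - g A| ≤ leftOscillation g A u :=
  le_csSup hb (mem_image_of_mem _ hζ)

lemma leftOscillation_le (hu : 0 ≤ u) {b : ℝ} (h : ∀ ζ ∈ Icc (A - u) A, |g ζ - g A| ≤ b) :
    leftOscillation g A u ≤ b :=
  csSup_le ((nonempty_Icc.2 (by linarith)).image _) (forall_mem_image.2 h)

lemma leftOscillation_nonneg (hb : BddAbove ((fun ζ => |g ζ - g A|) '' Icc (A - u) A))
    (hu : 0 ≤ u) : 0 ≤ leftOscillation g A u := by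
  simpa using abs_sub_le_leftOscillation hb (ζ := A) ⟨by linarith, le_rfl⟩

lemma leftOscillation_mono {v : ℝ} (hb : BddAbove ((fun ζ => |g ζ - g A|) '' Icc (A - v) A))
    (hu : 0 ≤ u) (huv : u ≤ v) : leftOscillation g A u ≤ leftOscillation g A v :=
  leftOscillation_le hu fun ζ hζ => abs_sub_le_leftOscillation hb ⟨by linarith [hζ.1], hζ.2⟩

lemma exists_leftOscillation_le_mul (hg : ContDiffAt ℝ 1 g A)
    (hb : BddAbove ((fun ζ => |g ζ - g A|) '' Icc (A - 1) A)) :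
    ∃ K : ℝ, ∀ u ∈ Ioc (0 : ℝ) 1, leftOscillation g A u ≤ K * u := by
  obtain ⟨K, t, ht, hlip⟩ := hg.exists_lipschitzOnWith
  obtain ⟨δ, hδ, hδt⟩ := Metric.nhds_basis_closedBall.mem_iff.1 ht
  rw [Real.closedBall_eq_Icc] at hδt
  have hM1 := leftOscillation_nonneg hb zero_le_one
  refine ⟨K + leftOscillation g A 1 / δ, fun u ⟨hu0, hu1⟩ => ?_⟩
  rcases le_or_gt u δ with huδ | hδu
  · have hlin : ∀ ζ ∈ Icc (A - u) A, |g ζ - g A| ≤ K * u := fun ζ hζ => by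
      have hζt : ζ ∈ t := hδt ⟨by linarith [hζ.1], by linarith [hζ.2]⟩
      have hAt : A ∈ t := hδt ⟨by linarith, by linarith⟩
      have hlipζ := hlip.dist_le_mul ζ hζt A hAt
      rw [Real.dist_eq, Real.dist_eq, abs_sub_comm ζ, abs_of_nonneg (sub_nonneg.2 hζ.2)] at hlipζ
      exact hlipζ.trans (by gcongr; linarith [hζ.1])
    calc leftOscillation g A u ≤ K * u := leftOscillation_le hu0.le hlin
      _ ≤ _ := by gcongr; exact le_add_of_nonneg_right (by positivity)
  · calc leftOscillation g A u ≤ leftOscillation g A 1 := leftOscillation_mono hb hu0.le hu1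
      _ ≤ leftOscillation g A 1 / δ * u := by
        rw [div_mul_eq_mul_div, le_div_iff₀ hδ]; nlinarith
      _ ≤ _ := by gcongr; exact le_add_of_nonneg_left K.2

end leftOscillation

lemma lintegral_ofReal_mul_min_lt_top {ν : Measure ℝ} {f : ℝ → ℝ} {K c : ℝ}
    (hν : ∫⁻ z in Ioi (0 : ℝ), ENNReal.ofReal (min 1 (z ^ 2)) ∂ν < ⊤)
    (hf0 : ∀ u ∈ Ioc (0 : ℝ) 1, f u ≤ K * u)
    (hf1 : ∫⁻ u in Ioi (1 : ℝ), ENNReal.ofReal (f u) ∂ν < ⊤) :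
    ∫⁻ u in Ioi (0 : ℝ), ENNReal.ofReal (f u) * ENNReal.ofReal (min u c) ∂ν < ⊤ := by
  rw [← Ioc_union_Ioi_eq_Ioi zero_le_one, lintegral_union measurableSet_Ioi Ioc_disjoint_Ioi_same]
  refine ENNReal.add_lt_top.2 ⟨?_, ?_⟩
  · calc _ ≤ ∫⁻ u in Ioc (0 : ℝ) 1, ENNReal.ofReal K * ENNReal.ofReal (min 1 (u ^ 2)) ∂ν :=
          setLIntegral_mono' measurableSet_Ioc fun u ⟨hu0, hu1⟩ => ?_
      _ ≤ ENNReal.ofReal K * ∫⁻ u in Ioi (0 : ℝ), ENNReal.ofReal (min 1 (u ^ 2)) ∂ν := by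
          rw [lintegral_const_mul' _ _ ENNReal.ofReal_ne_top]
          gcongr
          exact Ioc_subset_Ioi_self
      _ < ⊤ := ENNReal.mul_lt_top ENNReal.ofReal_lt_top hν
    rw [min_eq_right (show u ^ 2 ≤ 1 by nlinarith), ← ENNReal.ofReal_mul' (sq_nonneg u), sq,
      ← mul_assoc, ENNReal.ofReal_mul' hu0.le]
    gcongr
    · exact hf0 u ⟨hu0, hu1⟩
    · exact min_le_left _ _
  · calc _ ≤ ∫⁻ u in Ioi (1 : ℝ), ENNReal.ofReal (f u) * ENNReal.ofReal c ∂ν :=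
          setLIntegral_mono' measurableSet_Ioi fun u _ => by gcongr; exact min_le_right _ _
      _ < ⊤ := by
          rw [lintegral_mul_const' _ _ ENNReal.ofReal_ne_top]
          exact ENNReal.mul_lt_top hf1 ENNReal.ofReal_lt_top

lemma lintegral_Ioo_exp_neg_mul_le {Φ : ℝ} (hΦ : 0 < Φ) (m : ℝ) :
    ∫⁻ z in Ioo (0 : ℝ) m, ENNReal.ofReal (exp (-Φ * z)) ≤ ENNReal.ofReal (min m Φ⁻¹) := by
  rw [ENNReal.ofReal_min]
  refine le_min ?_ ?_
  · calc _ ≤ ∫⁻ _ in Ioo (0 : ℝ) m, 1 := setLIntegral_mono' measurableSet_Ioo fun z hz =>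
          ENNReal.ofReal_le_one.2 (exp_le_one_iff.2 (by nlinarith [hz.1]))
      _ = _ := by simp [Real.volume_Ioo]
  · calc _ ≤ ∫⁻ z in Ioi (0 : ℝ), ENNReal.ofReal (exp (-Φ * z)) :=
          lintegral_mono_set Ioo_subset_Ioi_self
      _ = _ := by
          rw [← ofReal_integral_eq_lintegral_ofReal (integrableOn_exp_mul_Ioi (by linarith) 0)
            (ae_of_all _ fun z => (exp_pos _).le), integral_exp_mul_Ioi (by linarith)]
          simp

lemma lintegral_Ioo_mul_abs_sub_le {w g : ℝ → ℝ} {Φ K A x u : ℝ} (hΦ : 0 < Φ) (hK : 0 ≤ K)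
    (hw : ∀ y, 0 < y → w y ≤ K * exp (Φ * y))
    (hb : BddAbove ((fun ζ => |g ζ - g A|) '' Icc (A - u) A)) :
    ∫⁻ z in Ioo (0 : ℝ) (min u (x - A)), ENNReal.ofReal (w (x - z - A) * |g (z + A - u) - g A|)
      ≤ ENNReal.ofReal (K * exp (Φ * (x - A))) *
        (ENNReal.ofReal (leftOscillation g A u) * ENNReal.ofReal (min u Φ⁻¹)) := by
  set c := K * exp (Φ * (x - A)) * leftOscillation g A u
  calc _ ≤ ∫⁻ z in Ioo (0 : ℝ) (min u (x - A)), ENNReal.ofReal c * ENNReal.ofReal (exp (-Φ * z)) :=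
        setLIntegral_mono' measurableSet_Ioo fun z ⟨hz0, hz⟩ => ?_
    _ ≤ ENNReal.ofReal c * ∫⁻ z in Ioo (0 : ℝ) u, ENNReal.ofReal (exp (-Φ * z)) := by
        rw [lintegral_const_mul' _ _ ENNReal.ofReal_ne_top]
        gcongr
        exact min_le_left _ _
    _ ≤ ENNReal.ofReal c * ENNReal.ofReal (min u Φ⁻¹) := by
        gcongr
        exact lintegral_Ioo_exp_neg_mul_le hΦ u
    _ = _ := by rw [ENNReal.ofReal_mul (by positivity), mul_assoc]
  obtain ⟨hzu, hzx⟩ := lt_min_iff.1 hz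
  rw [← ENNReal.ofReal_mul' (exp_pos _).le]
  apply ENNReal.ofReal_le_ofReal
  calc w (x - z - A) * |g (z + A - u) - g A|
      ≤ K * exp (Φ * (x - z - A)) * leftOscillation g A u :=
        mul_le_mul (hw _ (by linarith)) (abs_sub_le_leftOscillation hb ⟨by linarith, by linarith⟩)
          (abs_nonneg _) (by positivity)
    _ = c * exp (-Φ * z) := by
        rw [show Φ * (x - z - A) = Φ * (x - A) + -Φ * z by ring, exp_add]
        ring

lemma deriv_le_of_deriv_exp_neg_mul_le {W : ℝ → ℝ} {Φ C L y : ℝ} (hΦ : 0 ≤ Φ)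
    (hW : DifferentiableAt ℝ W y) (hC : exp (-Φ * y) * W y ≤ C)
    (hL : deriv (fun t => exp (-Φ * t) * W t) y ≤ L) :
    deriv W y ≤ (L + Φ * C) * exp (Φ * y) := by
  have hexp : HasDerivAt (fun t => exp (-Φ * t)) (exp (-Φ * y) * -Φ) y := by
    simpa using ((hasDerivAt_id y).const_mul (-Φ)).exp
  have hprod : HasDerivAt (fun t => exp (-Φ * t) * W t)
      (exp (-Φ * y) * -Φ * W y + exp (-Φ * y) * deriv W y) y := hexp.mul hW.hasDerivAt
  rw [hprod.deriv] at hL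
  have hinv : exp (Φ * y) * exp (-Φ * y) = 1 := by rw [← exp_add]; simp
  have key : deriv W y = ((exp (-Φ * y) * -Φ * W y + exp (-Φ * y) * deriv W y)
      + Φ * (exp (-Φ * y) * W y)) * exp (Φ * y) := by
    linear_combination (-deriv W y) * hinv
  rw [key]
  gcongr

theorem phi_deriv_uniform_bound_general
    (ν : Measure ℝ) (Φ A C L : ℝ) (g W : ℝ → ℝ)
    (hν : ∫⁻ z in Set.Ioi (0:ℝ), ENNReal.ofReal (min 1 (z ^ 2)) ∂ν < ⊤)
    (hΦ : 0 < Φ)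
    (hgb : ∀ K : Set ℝ, IsCompact K → ∃ M : ℝ, ∀ y ∈ K, |g y| ≤ M)
    (hWd : ∀ y ∈ Set.Ioi (0:ℝ), DifferentiableAt ℝ W y)
    (hWΦb : ∀ y ∈ Set.Ici (0:ℝ), Real.exp (-Φ * y) * W y ≤ C)
    (hL : ∀ y ∈ Set.Ioi (0:ℝ), deriv (fun t => Real.exp (-Φ * t) * W t) y ≤ L)
    (hC1 : ∃ ε > (0:ℝ), ContDiffOn ℝ 2 g (Set.Ioo (A - ε) (A + ε)))
    (hC2 : ∫⁻ u in Set.Ioi (1:ℝ),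
        ENNReal.ofReal (sSup ((fun ζ => |g ζ - g A|) '' Set.Icc (A - u) A)) ∂ν < ⊤) :
    ∃ CA : ℝ, ∀ x > A,
      (∫⁻ u in Set.Ioi (0:ℝ),
        (∫⁻ z in Set.Ioo (0:ℝ) (min u (x - A)),
          ENNReal.ofReal (deriv W (x - z - A) * |g (z + A - u) - g A|)) ∂ν)
      ≤ ENNReal.ofReal (Real.exp (Φ * (x - A)) * CA) := by
  obtain ⟨ε, hε, hg⟩ := hC1
  set K := max (L + Φ * C) 0
  have hW' : ∀ y, 0 < y → deriv W y ≤ K * exp (Φ * y) := fun y hy =>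
    (deriv_le_of_deriv_exp_neg_mul_le hΦ.le (hWd y hy) (hWΦb y hy.le) (hL y hy)).trans
      (mul_le_mul_of_nonneg_right (le_max_left _ _) (exp_pos _).le)
  have hb := bddAbove_abs_sub_image_Icc hgb A
  have hgA : ContDiffAt ℝ 1 g A :=
    (hg.contDiffAt (Ioo_mem_nhds (by linarith) (by linarith))).of_le one_le_two
  obtain ⟨K', hK'⟩ := exists_leftOscillation_le_mul hgA (hb 1)
  set T := ∫⁻ u in Ioi (0 : ℝ),
    ENNReal.ofReal (leftOscillation g A u) * ENNReal.ofReal (min u Φ⁻¹) ∂ν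
  have hT : T < ⊤ := lintegral_ofReal_mul_min_lt_top hν hK' hC2
  refine ⟨K * T.toReal, fun x _ => ?_⟩
  calc _ ≤ ∫⁻ u in Ioi (0 : ℝ), ENNReal.ofReal (K * exp (Φ * (x - A))) *
        (ENNReal.ofReal (leftOscillation g A u) * ENNReal.ofReal (min u Φ⁻¹)) ∂ν :=
        lintegral_mono fun u => lintegral_Ioo_mul_abs_sub_le hΦ (le_max_right _ _) hW' (hb u)
    _ = ENNReal.ofReal (K * exp (Φ * (x - A))) * T := lintegral_const_mul' _ _ ENNReal.ofReal_ne_top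
    _ = _ := by
        rw [ENNReal.ofReal_mul (by positivity), ENNReal.ofReal_mul (exp_pos _).le,
          ENNReal.ofReal_mul (le_max_right _ _), ENNReal.ofReal_toReal hT.ne]
        ring

/-- under (C1)-(C2), there is a finite constant `C_A`, independent
of `x`, such that for every `x > A`,
`∫_{(0,∞)} ν(du) ∫_0^{min(u,x−A)} W'(x−z−A)|g(z+A−u) − g(A)| dz ≤ e^{Φ(x−A)} C_A`. -/
theorem phi_deriv_uniform_bound
    (ν : Measure ℝ) (Φ A C L : ℝ) (g W : ℝ → ℝ)
    (hν : ∫⁻ z in Set.Ioi (0:ℝ), ENNReal.ofReal (min 1 (z ^ 2)) ∂ν < ⊤)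
    (hΦ : 0 < Φ)
    (hgm : Measurable g)
    (hgb : ∀ K : Set ℝ, IsCompact K → ∃ M : ℝ, ∀ y ∈ K, |g y| ≤ M)
    (hW0 : ∀ y < (0:ℝ), W y = 0)
    (hWc : ContinuousOn W (Set.Ici 0))
    (hWm : MonotoneOn W (Set.Ici 0))
    (hWd : ∀ y ∈ Set.Ioi (0:ℝ), DifferentiableAt ℝ W y)
    (hWd' : ContinuousOn (deriv W) (Set.Ioi 0))
    (hWΦm : MonotoneOn (fun y => Real.exp (-Φ * y) * W y) (Set.Ici 0))
    (hWΦb : ∀ y ∈ Set.Ici (0:ℝ), Real.exp (-Φ * y) * W y ≤ C)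
    (hL : ∀ y ∈ Set.Ioi (0:ℝ), deriv (fun t => Real.exp (-Φ * t) * W t) y ≤ L)
    (hC1 : ∃ ε > (0:ℝ), ContDiffOn ℝ 2 g (Set.Ioo (A - ε) (A + ε)))
    (hC2 : ∫⁻ u in Set.Ioi (1:ℝ),
        ENNReal.ofReal (sSup ((fun ζ => |g ζ - g A|) '' Set.Icc (A - u) A)) ∂ν < ⊤) :
    ∃ CA : ℝ, ∀ x > A,
      (∫⁻ u in Set.Ioi (0:ℝ),
        (∫⁻ z in Set.Ioo (0:ℝ) (min u (x - A)),
          ENNReal.ofReal (deriv W (x - z - A) * |g (z + A - u) - g A|)) ∂ν)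
      ≤ ENNReal.ofReal (Real.exp (Φ * (x - A)) * CA) :=
  phi_deriv_uniform_bound_general ν Φ A C L g W hν hΦ hgb hWd hWΦb hL hC1 hC2
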